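/- arXiv:2603.07292 — 3 statements merged into one kernel-verified Lean document; each statement's English description precedes it below -/
import Mathlib

section
/- Let M > 0 and H ≥ 1 be fixed reals, and define f(N₂) = ((N₂ - M)/M) * (1 - (1 - M/N₂)^H) for N₂ > M. Then f is strictly increasing in N₂ on (M, ∞); specifically, its derivative equals (1/M)(1 - (1 - M/N₂)^H (1 + M H / N₂)) > 0. -/
theorem stmt2 (M H : ℝ) (hM : 0 < M) (hH : 1 ≤ H) :
    StrictMonoOn (fun N₂ : ℝ => ((N₂ - M) / M) * (1 - (1 - M / N₂) ^ H)) (Set.Ioi M) ∧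
    ∀ N₂ : ℝ, M < N₂ →
      HasDerivAt (fun N₂ : ℝ => ((N₂ - M) / M) * (1 - (1 - M / N₂) ^ H))
        ((1 / M) * (1 - (1 - M / N₂) ^ H * (1 + M * H / N₂))) N₂ ∧
      0 < (1 / M) * (1 - (1 - M / N₂) ^ H * (1 + M * H / N₂)) := by
  have key : ∀ N₂ : ℝ, M < N₂ →
      HasDerivAt (fun N₂ : ℝ => ((N₂ - M) / M) * (1 - (1 - M / N₂) ^ H))
        ((1 / M) * (1 - (1 - M / N₂) ^ H * (1 + M * H / N₂))) N₂ ∧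
      0 < (1 / M) * (1 - (1 - M / N₂) ^ H * (1 + M * H / N₂)) := by
    intro x hx
    have hx0 : 0 < x := hM.trans hx
    have hu : 0 < 1 - M / x := by
      rw [sub_pos, div_lt_one hx0]; exact hx
    have ht : 0 < M / x := div_pos hM hx0
    have hu1 : 1 - M / x < 1 := by linarith
    constructor
    · -- derivative
      have hd1 : HasDerivAt (fun y : ℝ => (y - M) / M) (1 / M) x := by
        simpa using ((hasDerivAt_id x).sub_const M).div_const M
      have hd2 : HasDerivAt (fun y : ℝ => 1 - M / y) (M / x ^ 2) x := by
        have h : HasDerivAt (fun y : ℝ => M / y) (M * -(x ^ 2)⁻¹) x := by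
          simpa [div_eq_mul_inv] using (hasDerivAt_inv (ne_of_gt hx0)).const_mul M
        have := h.const_sub 1
        refine this.congr_deriv ?_
        field_simp
      have hd3 : HasDerivAt (fun y : ℝ => (1 - M / y) ^ H)
          (M / x ^ 2 * H * (1 - M / x) ^ (H - 1)) x :=
        hd2.rpow_const (Or.inr hH)
      have hd4 := hd1.mul ((hasDerivAt_const x (1:ℝ)).sub hd3)
      refine hd4.congr_deriv ?_
      simp only [Pi.sub_apply]
      have hA : (1 - M / x) ^ (H - 1) * (1 - M / x) = (1 - M / x) ^ H := by
        rw [← Real.rpow_add_one (ne_of_gt hu)]; norm_num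
      have hux : 1 - M / x = (x - M) / x := by field_simp
      rw [← hA, hux]
      field_simp
      ring
    · -- positivity
      have huH : 0 < (1 - M / x) ^ H := Real.rpow_pos_of_pos hu H
      set u := 1 - M / x with hu_def
      have hinv : (1 / u) ^ H * u ^ H = 1 := by
        rw [← Real.mul_rpow (by positivity) hu.le, one_div_mul_cancel (ne_of_gt hu),
          Real.one_rpow]
      have hne : x - M ≠ 0 := sub_ne_zero.mpr (ne_of_gt hx)
      have hs_eq : 1 / u - 1 = (M / x) / u := by
        field_simp [hu_def, hne]
        rw [hu_def, sub_sub_cancel]; field_simp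
      have hs_gt : M / x < 1 / u - 1 := by
        rw [hs_eq, lt_div_iff₀ hu]
        exact mul_lt_of_lt_one_right ht hu1
      have hBern : 1 + H * (1 / u - 1) ≤ (1 / u) ^ H := by
        have := one_add_mul_self_le_rpow_one_add (s := 1 / u - 1) (by
          have : 0 < 1 / u := by positivity
          linarith) hH
        simpa using this
      have hlt : 1 + M * H / x < (1 / u) ^ H := by
        have h1 : 1 + M * H / x < 1 + H * (1 / u - 1) := by
          have : M * H / x = H * (M / x) := by ring
          rw [this]
          have hH0 : 0 < H := lt_of_lt_of_le one_pos hH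
          nlinarith
        linarith
      have hmain : u ^ H * (1 + M * H / x) < 1 := by
        calc u ^ H * (1 + M * H / x) < u ^ H * (1 / u) ^ H :=
              mul_lt_mul_of_pos_left hlt huH
          _ = 1 := by rw [mul_comm]; exact hinv
      have h1M : 0 < 1 / M := by positivity
      have : 0 < 1 - u ^ H * (1 + M * H / x) := by linarith
      positivity
  refine ⟨?_, key⟩
  have hconv : Convex ℝ (Set.Ioi M) := convex_Ioi M
  apply strictMonoOn_of_deriv_pos hconv
  · intro x hx
    exact ((key x hx).1.differentiableAt).continuousAt.continuousWithinAt
  · intro x hx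
    rw [interior_Ioi] at hx
    rw [(key x hx).1.deriv]
    exact (key x hx).2
end

section
/- For M > 0, H ≥ 1 real, and M < N₂ < N₂', we have ((N₂ - M)/M)(1 - (1 - M/N₂)^H) < ((N₂' - M)/M)(1 - (1 - M/N₂')^H). -/
open Set Real

theorem stmt3 (M H N₂ N₂' : ℝ) (hM : 0 < M) (hH : 1 ≤ H)
    (h1 : M < N₂) (h2 : N₂ < N₂') :
    ((N₂ - M) / M) * (1 - (1 - M / N₂) ^ H) <
      ((N₂' - M) / M) * (1 - (1 - M / N₂') ^ H) := by
  set f : ℝ → ℝ := fun N => ((N - M) / M) * (1 - (1 - M / N) ^ H) with hf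
  have hderiv : ∀ N ∈ Set.Ioi M, HasDerivAt f
      ((1/M) * (1 - (1 - M/N) ^ H)
        + ((N - M)/M) * (-(H * (1 - M/N) ^ (H-1) * (M / N^2)))) N := by
    intro N hN
    have hMN : M < N := hN
    have hN0 : 0 < N := hM.trans hMN
    have hu0 : 0 < 1 - M / N := by
      have : M / N < 1 := (div_lt_one hN0).mpr hMN
      linarith
    have hinv : HasDerivAt (fun x : ℝ => M / x) (M * -(N^2)⁻¹) N := by
      simpa [div_eq_mul_inv] using (hasDerivAt_inv hN0.ne').const_mul M
    have hu : HasDerivAt (fun x : ℝ => 1 - M / x) (M / N^2) N := by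
      have := (hasDerivAt_const N (1:ℝ)).sub hinv
      exact this.congr_deriv (by ring)
    have hrpow : HasDerivAt (fun x : ℝ => (1 - M / x) ^ H)
        (H * (1 - M/N) ^ (H-1) * (M / N^2)) N := by
      exact (Real.hasDerivAt_rpow_const (p := H) (Or.inl hu0.ne')).comp N hu
    have hlin : HasDerivAt (fun x : ℝ => (x - M) / M) (1/M) N := by
      simpa using ((hasDerivAt_id N).sub_const M).div_const M
    have := hlin.mul ((hasDerivAt_const N (1:ℝ)).sub hrpow)
    exact this.congr_deriv (by simp only [Pi.sub_apply]; ring)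
  have hpos : ∀ N ∈ Set.Ioi M,
      0 < (1/M) * (1 - (1 - M/N) ^ H)
        + ((N - M)/M) * (-(H * (1 - M/N) ^ (H-1) * (M / N^2))) := by
    intro N hN
    have hMN : M < N := hN
    have hN0 : 0 < N := hM.trans hMN
    have hMN1 : M / N < 1 := (div_lt_one hN0).mpr hMN
    set u : ℝ := 1 - M / N with hu_def
    have hu0 : 0 < u := by simp only [hu_def]; linarith
    have hu1 : u < 1 := by
      have : 0 < M / N := div_pos hM hN0
      simp only [hu_def]; linarith
    -- Bernoulli: (1/u)^H ≥ 1 + H*(1/u - 1)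
    have hs : (0:ℝ) ≤ 1/u - 1 := by
      rw [sub_nonneg, le_div_iff₀ hu0, one_mul]; exact hu1.le
    have hbern : 1 + H * (1/u - 1) ≤ (1/u) ^ H := by
      have := one_add_mul_self_le_rpow_one_add (s := 1/u - 1) (by linarith) hH
      simpa using this
    have hmul : (1/u) ^ H * u ^ H = 1 := by
      rw [← Real.mul_rpow (by positivity) hu0.le]
      rw [one_div_mul_cancel hu0.ne', Real.one_rpow]
    have huH : (0:ℝ) < u ^ H := Real.rpow_pos_of_pos hu0 _
    have huH1 : (0:ℝ) < u ^ (H-1) := Real.rpow_pos_of_pos hu0 _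
    have hratio : u ^ H / u = u ^ (H - 1) := by
      rw [Real.rpow_sub hu0, Real.rpow_one]
    -- key: u^H + H*(1-u)*u^(H-1) ≤ 1
    have key : u ^ H + H * (1 - u) * u ^ (H-1) ≤ 1 := by
      have h3 : (1 + H * (1/u - 1)) * u ^ H ≤ (1/u) ^ H * u ^ H :=
        mul_le_mul_of_nonneg_right hbern huH.le
      rw [hmul] at h3
      have hexp : (1 + H * (1/u - 1)) * u ^ H
          = u ^ H + H * (1 - u) * (u ^ H / u) := by
        field_simp
      rw [hexp, hratio] at h3
      exact h3
    have hMoverN : 1 - u = M / N := by simp [hu_def]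
    have key2 : H * (M / N) * u ^ (H-1) ≤ 1 - u ^ H := by
      rw [← hMoverN]; linarith
    have hE : (1/M) * (1 - u ^ H) + ((N - M)/M) * (-(H * u ^ (H-1) * (M / N^2)))
        = ((1 - u ^ H) - H * (M / N) * u ^ (H-1)) / M + H * u ^ (H-1) * M / N^2 := by
      field_simp
      ring
    rw [hE]
    have t1 : 0 ≤ ((1 - u ^ H) - H * (M / N) * u ^ (H-1)) / M :=
      div_nonneg (by linarith) hM.le
    have t2 : 0 < H * u ^ (H-1) * M / N^2 := by positivity
    linarith
  have hmono : StrictMonoOn f (Set.Ioi M) := by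
    apply strictMonoOn_of_deriv_pos (convex_Ioi M)
    · exact fun x hx => (hderiv x hx).continuousAt.continuousWithinAt
    · intro x hx
      rw [interior_Ioi] at hx
      rw [(hderiv x hx).deriv]
      exact hpos x hx
  exact hmono h1 (h1.trans h2) h2
end

section
/- Let p, q ∈ [0,1] with p > q, and let (X_s) and (Y_s) be independent Bernoulli(p) and Bernoulli(q) sequences, all mutually independent. Define U_s = X_s - Y_s, S_t = Σ_{s=1}^t U_s, V_t = Σ_{s=1}^t |U_s|. Then E[U_s] = p - q > 0 and E[|U_s|] = p(1-q) + q(1-p), and by the law of large numbers S_t/t → p-q almost surely while τ(V_t)/t → 0 almost surely where τ(v)=sqrt(2v log((c/δ)√v)); hence almost surely there exists t with S_t ≥ τ(V_t). -/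
open MeasureTheory ProbabilityTheory Filter

section Aux

variable {Ω : Type*} [MeasurableSpace Ω] {μ : Measure Ω} [IsProbabilityMeasure μ]

lemma bern_indicator (X : Ω → ℝ) (hval : ∀ ω, X ω = 0 ∨ X ω = 1) :
    X = Set.indicator {ω | X ω = 1} (1 : Ω → ℝ) := by
  funext ω
  by_cases h1 : X ω = 1
  · simp [Set.indicator, h1]
  · have h0 : X ω = 0 := (hval ω).resolve_right h1
    simp [Set.indicator, h0, h1]

lemma bern_integrable (X : Ω → ℝ) (hm : Measurable X) (hval : ∀ ω, X ω = 0 ∨ X ω = 1) :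
    Integrable X μ := by
  rw [bern_indicator X hval]
  exact (integrable_const (1:ℝ)).indicator (hm (measurableSet_singleton 1))

lemma bern_integral (X : Ω → ℝ) (hm : Measurable X) (hval : ∀ ω, X ω = 0 ∨ X ω = 1) :
    ∫ ω, X ω ∂μ = (μ {ω | X ω = 1}).toReal := by
  conv_lhs => rw [show (fun ω => X ω) = X from rfl, bern_indicator X hval]
  exact integral_indicator_one (hm (measurableSet_singleton 1))

open scoped Classical in
lemma bern_preimage (X : Ω → ℝ) (hval : ∀ ω, X ω = 0 ∨ X ω = 1) (s : Set ℝ) :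
    X ⁻¹' s = (if (1:ℝ) ∈ s then {ω | X ω = 1} else ∅)
      ∪ (if (0:ℝ) ∈ s then {ω | X ω = 1}ᶜ else ∅) := by
  ext ω
  rcases hval ω with h | h <;>
    by_cases h0 : (0:ℝ) ∈ s <;> by_cases h1 : (1:ℝ) ∈ s <;>
      simp [Set.mem_preimage, h, h0, h1]

open scoped Classical in
lemma bern_measure_preimage (X : Ω → ℝ) (hm : Measurable X)
    (hval : ∀ ω, X ω = 0 ∨ X ω = 1) (s : Set ℝ) :
    μ (X ⁻¹' s) = (if (1:ℝ) ∈ s then μ {ω | X ω = 1} else 0)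
      + (if (0:ℝ) ∈ s then 1 - μ {ω | X ω = 1} else 0) := by
  have hA : MeasurableSet {ω | X ω = 1} := hm (measurableSet_singleton 1)
  rw [bern_preimage X hval s]
  by_cases h1 : (1:ℝ) ∈ s <;> by_cases h0 : (0:ℝ) ∈ s <;> simp [h1, h0]
  · rw [add_comm]
    exact (tsub_add_cancel_of_le prob_le_one).symm
  · exact prob_compl_eq_one_sub hA

lemma bern_map_eq (X Z : Ω → ℝ) (hmX : Measurable X) (hmZ : Measurable Z)
    (hvX : ∀ ω, X ω = 0 ∨ X ω = 1) (hvZ : ∀ ω, Z ω = 0 ∨ Z ω = 1)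
    (h : μ {ω | X ω = 1} = μ {ω | Z ω = 1}) :
    μ.map X = μ.map Z := by
  refine Measure.ext fun s hs => ?_
  rw [Measure.map_apply hmX hs, Measure.map_apply hmZ hs,
    bern_measure_preimage X hmX hvX s, bern_measure_preimage Z hmZ hvZ s, h]

lemma bern_identDistrib (X Z : Ω → ℝ) (hmX : Measurable X) (hmZ : Measurable Z)
    (hvX : ∀ ω, X ω = 0 ∨ X ω = 1) (hvZ : ∀ ω, Z ω = 0 ∨ Z ω = 1)
    (h : μ {ω | X ω = 1} = μ {ω | Z ω = 1}) :
    IdentDistrib X Z μ μ :=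
  ⟨hmX.aemeasurable, hmZ.aemeasurable, bern_map_eq X Z hmX hmZ hvX hvZ h⟩

end Aux

theorem stmt13
    {Ω : Type*} [MeasurableSpace Ω] (μ : Measure Ω) [IsProbabilityMeasure μ]
    (p q : ℝ) (hpq : q < p) (hp1 : p ≤ 1) (hq0 : 0 ≤ q)
    (W : ℕ ⊕ ℕ → Ω → ℝ)
    (hmeas : ∀ k, Measurable (W k))
    (hindep : iIndepFun W μ)
    (hval : ∀ k ω, W k ω = 0 ∨ W k ω = 1)
    (hX : ∀ s, μ {ω | W (Sum.inl s) ω = 1} = ENNReal.ofReal p)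
    (hY : ∀ s, μ {ω | W (Sum.inr s) ω = 1} = ENNReal.ofReal q)
    (c δ : ℝ) (hc : 1 < c) (hδ0 : 0 < δ) (hδ1 : δ < 1)
    (U : ℕ → Ω → ℝ) (hU : ∀ s ω, U s ω = W (Sum.inl s) ω - W (Sum.inr s) ω)
    (S V : ℕ → Ω → ℝ)
    (hS : ∀ t ω, S t ω = ∑ s ∈ Finset.range t, U s ω)
    (hV : ∀ t ω, V t ω = ∑ s ∈ Finset.range t, |U s ω|)
    (τ : ℝ → ℝ) (hτ : ∀ v, τ v = Real.sqrt (2 * v * Real.log (c * Real.sqrt v / δ))) :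
    (∀ s, ∫ ω, U s ω ∂μ = p - q) ∧ (0 < p - q) ∧
    (∀ s, ∫ ω, |U s ω| ∂μ = p * (1 - q) + q * (1 - p)) ∧
    (∀ᵐ ω ∂μ, Tendsto (fun t : ℕ => S t ω / t) atTop (nhds (p - q))) ∧
    (∀ᵐ ω ∂μ, Tendsto (fun t : ℕ => τ (V t ω) / t) atTop (nhds 0)) ∧
    (∀ᵐ ω ∂μ, ∃ t : ℕ, τ (V t ω) ≤ S t ω) := by
  have hp0 : 0 ≤ p := le_of_lt (lt_of_le_of_lt hq0 hpq)
  have hiX : ∀ s, Integrable (W (Sum.inl s)) μ :=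
    fun s => bern_integrable _ (hmeas _) (hval _)
  have hiY : ∀ s, Integrable (W (Sum.inr s)) μ :=
    fun s => bern_integrable _ (hmeas _) (hval _)
  have hintX : ∀ s, ∫ ω, W (Sum.inl s) ω ∂μ = p := by
    intro s
    rw [bern_integral _ (hmeas _) (hval _), hX s, ENNReal.toReal_ofReal hp0]
  have hintY : ∀ s, ∫ ω, W (Sum.inr s) ω ∂μ = q := by
    intro s
    rw [bern_integral _ (hmeas _) (hval _), hY s, ENNReal.toReal_ofReal hq0]
  -- Part 1
  have part1 : ∀ s, ∫ ω, U s ω ∂μ = p - q := by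
    intro s
    simp only [hU]
    rw [integral_sub (hiX s) (hiY s), hintX s, hintY s]
  -- Part 2
  have part2 : 0 < p - q := sub_pos.2 hpq
  -- Part 3
  have part3 : ∀ s, ∫ ω, |U s ω| ∂μ = p * (1 - q) + q * (1 - p) := by
    intro s
    have habs : ∀ ω, |U s ω| = W (Sum.inl s) ω + W (Sum.inr s) ω
        - 2 * (W (Sum.inl s) ω * W (Sum.inr s) ω) := by
      intro ω
      rcases hval (Sum.inl s) ω with h1 | h1 <;> rcases hval (Sum.inr s) ω with h2 | h2 <;>
        rw [hU, h1, h2] <;> norm_num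
    have hmXY : Measurable (fun ω => W (Sum.inl s) ω * W (Sum.inr s) ω) :=
      (hmeas _).mul (hmeas _)
    have hvXY : ∀ ω, W (Sum.inl s) ω * W (Sum.inr s) ω = 0
        ∨ W (Sum.inl s) ω * W (Sum.inr s) ω = 1 := by
      intro ω
      rcases hval (Sum.inl s) ω with h1 | h1 <;> rcases hval (Sum.inr s) ω with h2 | h2 <;>
        rw [h1, h2] <;> norm_num
    have hiXY : Integrable (fun ω => W (Sum.inl s) ω * W (Sum.inr s) ω) μ :=
      bern_integrable _ hmXY hvXY
    have hset : {ω | W (Sum.inl s) ω * W (Sum.inr s) ω = 1}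
        = W (Sum.inl s) ⁻¹' {1} ∩ W (Sum.inr s) ⁻¹' {1} := by
      ext ω
      simp only [Set.mem_setOf_eq, Set.mem_inter_iff, Set.mem_preimage,
        Set.mem_singleton_iff]
      constructor
      · intro h
        rcases hval (Sum.inl s) ω with h1 | h1 <;> rcases hval (Sum.inr s) ω with h2 | h2 <;>
          simp_all
      · rintro ⟨h1, h2⟩; rw [h1, h2, mul_one]
    have hind : IndepFun (W (Sum.inl s)) (W (Sum.inr s)) μ :=
      hindep.indepFun (by simp)
    have hmul : μ {ω | W (Sum.inl s) ω * W (Sum.inr s) ω = 1}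
        = ENNReal.ofReal p * ENNReal.ofReal q := by
      rw [hset, hind.measure_inter_preimage_eq_mul _ _ (measurableSet_singleton 1)
        (measurableSet_singleton 1)]
      have e1 : W (Sum.inl s) ⁻¹' {1} = {ω | W (Sum.inl s) ω = 1} := rfl
      have e2 : W (Sum.inr s) ⁻¹' {1} = {ω | W (Sum.inr s) ω = 1} := rfl
      rw [e1, e2, hX s, hY s]
    have hintXY : ∫ ω, W (Sum.inl s) ω * W (Sum.inr s) ω ∂μ = p * q := by
      rw [bern_integral _ hmXY hvXY, hmul, ENNReal.toReal_mul,
        ENNReal.toReal_ofReal hp0, ENNReal.toReal_ofReal hq0]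
    calc ∫ ω, |U s ω| ∂μ
        = ∫ ω, (W (Sum.inl s) ω + W (Sum.inr s) ω
            - 2 * (W (Sum.inl s) ω * W (Sum.inr s) ω)) ∂μ :=
          integral_congr_ae (Filter.Eventually.of_forall habs)
      _ = p * (1 - q) + q * (1 - p) := by
          have hiadd : Integrable (fun ω => W (Sum.inl s) ω + W (Sum.inr s) ω) μ :=
            (hiX s).add (hiY s)
          have hi2 : Integrable (fun ω => 2 * (W (Sum.inl s) ω * W (Sum.inr s) ω)) μ :=
            hiXY.const_mul 2
          rw [integral_sub hiadd hi2,
            integral_add (hiX s) (hiY s), integral_const_mul, hintX s, hintY s, hintXY]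
          ring
  -- Part 4
  have part4 : ∀ᵐ ω ∂μ, Tendsto (fun t : ℕ => S t ω / t) atTop (nhds (p - q)) := by
    have hA : ∀ᵐ ω ∂μ, Tendsto
        (fun n : ℕ => (∑ i ∈ Finset.range n, W (Sum.inl i) ω) / n) atTop (nhds p) := by
      have := strong_law_ae_real (μ := μ) (fun s => W (Sum.inl s))
        (hiX 0)
        (fun i j hij => hindep.indepFun (fun h => hij (Sum.inl.inj h)))
        (fun i => bern_identDistrib _ _ (hmeas _) (hmeas _) (hval _) (hval _)
          (by rw [hX i, hX 0]))
      simpa [hintX 0] using this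
    have hB : ∀ᵐ ω ∂μ, Tendsto
        (fun n : ℕ => (∑ i ∈ Finset.range n, W (Sum.inr i) ω) / n) atTop (nhds q) := by
      have := strong_law_ae_real (μ := μ) (fun s => W (Sum.inr s))
        (hiY 0)
        (fun i j hij => hindep.indepFun (fun h => hij (Sum.inr.inj h)))
        (fun i => bern_identDistrib _ _ (hmeas _) (hmeas _) (hval _) (hval _)
          (by rw [hY i, hY 0]))
      simpa [hintY 0] using this
    filter_upwards [hA, hB] with ω h1 h2
    refine (h1.sub h2).congr fun t => ?_
    rw [hS, ← sub_div, ← Finset.sum_sub_distrib]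
    congr 1
    exact Finset.sum_congr rfl fun s _ => (hU s ω).symm
  -- Part 5 (in fact deterministic)
  have part5' : ∀ ω, Tendsto (fun t : ℕ => τ (V t ω) / t) atTop (nhds 0) := by
    intro ω
    have hVnn : ∀ t, 0 ≤ V t ω := by
      intro t; rw [hV]
      exact Finset.sum_nonneg fun s _ => abs_nonneg _
    have hVle : ∀ t : ℕ, V t ω ≤ t := by
      intro t; rw [hV]
      calc ∑ s ∈ Finset.range t, |U s ω| ≤ ∑ _s ∈ Finset.range t, (1:ℝ) := by
            refine Finset.sum_le_sum fun s _ => ?_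
            rw [hU]
            rcases hval (Sum.inl s) ω with h1 | h1 <;>
              rcases hval (Sum.inr s) ω with h2 | h2 <;> rw [h1, h2] <;> norm_num
        _ = t := by simp
    set K : ℝ := |Real.log c - Real.log δ| with hK
    have hKnn : 0 ≤ K := abs_nonneg _
    set f : ℕ → ℝ := fun t => 2 * K / t + Real.log t / t with hf
    have hflim : Tendsto f atTop (nhds 0) := by
      have l1 : Tendsto (fun t : ℕ => 2 * K / (t:ℝ)) atTop (nhds 0) :=
        tendsto_const_div_atTop_nhds_zero_nat (2 * K)
      have l2 : Tendsto (fun t : ℕ => Real.log t / (t:ℝ)) atTop (nhds 0) :=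
        (Real.isLittleO_log_id_atTop.tendsto_div_nhds_zero).comp
          tendsto_natCast_atTop_atTop
      simpa [hf] using l1.add l2
    have hsqrtlim : Tendsto (fun t : ℕ => Real.sqrt (f t)) atTop (nhds 0) := by
      have := (Real.continuous_sqrt.tendsto' 0 0 Real.sqrt_zero).comp hflim
      exact this
    have hbound : ∀ t : ℕ, 1 ≤ t → τ (V t ω) / t ≤ Real.sqrt (f t) := by
      intro t ht
      have htR : (1:ℝ) ≤ t := by exact_mod_cast ht
      have htpos : (0:ℝ) < t := lt_of_lt_of_le zero_lt_one htR
      have hlogt : 0 ≤ Real.log t := Real.log_nonneg htR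
      have hv0 : 0 ≤ V t ω := hVnn t
      have hvt : V t ω ≤ t := hVle t
      rw [hτ]
      set v : ℝ := V t ω with hv
      set L : ℝ := Real.log (c * Real.sqrt v / δ) with hL
      have hmain : 2 * v * L ≤ 2 * (t:ℝ) * K + t * Real.log t := by
        rcases le_or_gt L 0 with hL0 | hL0
        · have h1 : 2 * v * L ≤ 0 :=
            mul_nonpos_of_nonneg_of_nonpos (by linarith) hL0
          have h2 : 0 ≤ 2 * (t:ℝ) * K + t * Real.log t := by positivity
          linarith
        · have hvpos : 0 < v := by
            rcases hv0.lt_or_eq with h | h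
            · exact h
            · exfalso
              rw [hL, ← h] at hL0
              simp at hL0
          have harg : 0 < c * Real.sqrt v / δ := by positivity
          have hLle : L ≤ Real.log (c * Real.sqrt t / δ) := by
            rw [hL]
            apply Real.log_le_log harg
            gcongr
          have hlog2 : Real.log (c * Real.sqrt t / δ)
              = Real.log c - Real.log δ + Real.log t / 2 := by
            rw [Real.log_div (by positivity) (ne_of_gt hδ0),
              Real.log_mul (by positivity) (by positivity),
              Real.log_sqrt (le_of_lt htpos)]
            ring
          have hLK : L ≤ K + Real.log t / 2 := by
            have habs := le_abs_self (Real.log c - Real.log δ)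
            rw [hlog2] at hLle
            rw [hK]
            linarith
          have hstep : 2 * v * L ≤ 2 * (t:ℝ) * (K + Real.log t / 2) := by
            apply mul_le_mul _ hLK (le_of_lt hL0) (by positivity)
            linarith
          linarith
      have hnum : 0 ≤ 2 * (t:ℝ) * K + t * Real.log t := by positivity
      have hfeq : Real.sqrt (f t)
          = Real.sqrt (2 * (t:ℝ) * K + t * Real.log t) / t := by
        rw [show f t = (2 * (t:ℝ) * K + t * Real.log t) / (t:ℝ) ^ 2 from by
          rw [hf]; field_simp]
        rw [Real.sqrt_div hnum, Real.sqrt_sq htpos.le]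
      rw [hfeq]
      gcongr
    have h0le : ∀ t : ℕ, 0 ≤ τ (V t ω) / t := by
      intro t
      apply div_nonneg _ (Nat.cast_nonneg t)
      rw [hτ]; exact Real.sqrt_nonneg _
    exact tendsto_of_tendsto_of_tendsto_of_le_of_le' tendsto_const_nhds hsqrtlim
      (Filter.Eventually.of_forall h0le) (eventually_atTop.2 ⟨1, hbound⟩)
  have part5 : ∀ᵐ ω ∂μ, Tendsto (fun t : ℕ => τ (V t ω) / t) atTop (nhds 0) :=
    Filter.Eventually.of_forall part5'
  refine ⟨part1, part2, part3, part4, part5, ?_⟩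
  -- Part 6
  filter_upwards [part4] with ω h4
  have h5 := part5' ω
  have hlim := h4.sub h5
  have hev : ∀ᶠ t : ℕ in atTop, 0 < S t ω / t - τ (V t ω) / t :=
    hlim.eventually (eventually_gt_nhds (by linarith : (0:ℝ) < p - q - 0))
  obtain ⟨t, ht1, ht2⟩ := ((eventually_ge_atTop 1).and hev).exists
  refine ⟨t, ?_⟩
  have htpos : (0:ℝ) < t := by exact_mod_cast Nat.lt_of_lt_of_le Nat.zero_lt_one ht1
  have hlt : τ (V t ω) / t < S t ω / t := by linarith
  have := (div_lt_div_iff_of_pos_right htpos).mp hlt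
  linarith
end
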